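/- arXiv:math/0605746 — 3 statements merged into one kernel-verified Lean document; each statement's English description precedes it below -/
import Mathlib

section
/- Let L, a, b, c be positive integers such that L*c = y1*a + y2*b for some nonnegative integers y1, y2. Then for every positive integer k, the square of side L*c + k*a*b can be tiled with squares of sides a, b, and c. -/
/-- The `a1 × a2` grid of unit cells is partitioned by axis-aligned translated
copies of bricks from `bricks` placed at integer positions.  A placement
`(x, y, w, h)` covers cells `(i, j)` with `x ≤ i < x + w` and `y ≤ j < y + h`. -/
def Tiles (bricks : Finset (ℕ × ℕ)) (a1 a2 : ℕ) : Prop :=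
  ∃ P : Finset (ℕ × ℕ × ℕ × ℕ),
    (∀ q ∈ P, (q.2.2.1, q.2.2.2) ∈ bricks ∧ q.1 + q.2.2.1 ≤ a1 ∧ q.2.1 + q.2.2.2 ≤ a2) ∧
    (∀ i j : ℕ, i < a1 → j < a2 →
      ∃! q : ℕ × ℕ × ℕ × ℕ, q ∈ P ∧
        q.1 ≤ i ∧ i < q.1 + q.2.2.1 ∧ q.2.1 ≤ j ∧ j < q.2.1 + q.2.2.2)

/-!
Cut the square of side `L * c + k * a * b` into an `L * c` square, two `L * c × k * a * b`
strips and a `k * a * b` square. The first is a grid of `c`-squares. Every other piece has one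
side divisible by both `a` and `b` and the other side of the form `y₁ * a + y₂ * b`, so it splits
into a grid of `a`-squares next to a grid of `b`-squares.
-/

namespace Tiles

variable {B B' : Finset (ℕ × ℕ)} {w w' h h' : ℕ}

theorem mono (hBB' : B ⊆ B') (ht : Tiles B w h) : Tiles B' w h := by
  obtain ⟨P, hP, hcover⟩ := ht
  exact ⟨P, fun q hq => ⟨hBB' (hP q hq).1, (hP q hq).2⟩, hcover⟩

theorem of_mem (hB : (w, h) ∈ B) : Tiles B w h := by
  refine ⟨{(0, 0, w, h)}, by simpa using hB, fun i j hi hj => ⟨(0, 0, w, h), ?_, ?_⟩⟩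
  · simp [hi, hj]
  · simp

theorem zero_width : Tiles B 0 h :=
  ⟨∅, by simp, fun _ _ hi => absurd hi (Nat.not_lt_zero _)⟩

theorem transpose (ht : Tiles B w h) : Tiles (B.image Prod.swap) h w := by
  obtain ⟨P, hP, hcover⟩ := ht
  let τ : ℕ × ℕ × ℕ × ℕ → ℕ × ℕ × ℕ × ℕ := fun q => (q.2.1, q.1, q.2.2.2, q.2.2.1)
  refine ⟨P.image τ, ?_, fun i j hi hj => ?_⟩
  · simp only [Finset.mem_image]
    rintro _ ⟨q, hq, rfl⟩
    obtain ⟨hqB, hqw, hqh⟩ := hP q hq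
    exact ⟨⟨_, hqB, rfl⟩, hqh, hqw⟩
  · obtain ⟨q, ⟨hq, hqcov⟩, hq_unique⟩ := hcover j i hj hi
    refine ⟨τ q, ⟨Finset.mem_image_of_mem τ hq, by simp only [τ]; omega⟩, ?_⟩
    rintro _ ⟨hr, hrcov⟩
    obtain ⟨r, hrP, rfl⟩ := Finset.mem_image.1 hr
    rw [hq_unique r ⟨hrP, by simp only [τ] at hrcov; omega⟩]

theorem add_width (ht : Tiles B w h) (ht' : Tiles B w' h) : Tiles B (w + w') h := by
  obtain ⟨P, hP, hcover⟩ := ht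
  obtain ⟨Q, hQ, hcover'⟩ := ht'
  let shift : ℕ × ℕ × ℕ × ℕ → ℕ × ℕ × ℕ × ℕ := fun q => (q.1 + w, q.2)
  refine ⟨P ∪ Q.image shift, ?_, fun i j hi hj => ?_⟩
  · simp only [Finset.mem_union, Finset.mem_image]
    rintro _ (hq | ⟨q, hq, rfl⟩)
    · obtain ⟨hqB, hqw, hqh⟩ := hP _ hq
      exact ⟨hqB, by omega, hqh⟩
    · obtain ⟨hqB, hqw, hqh⟩ := hQ q hq
      exact ⟨hqB, by simp only [shift]; omega, hqh⟩
  by_cases hiw : i < w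
  · obtain ⟨q, ⟨hq, hqcov⟩, hq_unique⟩ := hcover i j hiw hj
    refine ⟨q, ⟨Finset.mem_union_left _ hq, hqcov⟩, ?_⟩
    rintro r ⟨hr, hrcov⟩
    rcases Finset.mem_union.1 hr with hr | hr
    · exact hq_unique r ⟨hr, hrcov⟩
    · obtain ⟨t, -, rfl⟩ := Finset.mem_image.1 hr
      simp only [shift] at hrcov
      omega
  · obtain ⟨q, ⟨hq, hqcov⟩, hq_unique⟩ := hcover' (i - w) j (by omega) hj
    refine ⟨shift q, ⟨Finset.mem_union_right _ (Finset.mem_image_of_mem shift hq),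
      by simp only [shift]; omega⟩, ?_⟩
    rintro r ⟨hr, hrcov⟩
    rcases Finset.mem_union.1 hr with hr | hr
    · have := (hP r hr).2.1
      omega
    · obtain ⟨t, ht, rfl⟩ := Finset.mem_image.1 hr
      simp only [shift] at hrcov
      rw [hq_unique t ⟨ht, by omega⟩]

theorem of_transpose (ht : Tiles (B.image Prod.swap) h w) : Tiles B w h := by
  simpa [Finset.image_image] using ht.transpose

theorem add_height (ht : Tiles B w h) (ht' : Tiles B w h') : Tiles B w (h + h') :=
  of_transpose (ht.transpose.add_width ht'.transpose)

theorem mul_width (m : ℕ) (ht : Tiles B w h) : Tiles B (m * w) h := by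
  induction m with
  | zero => simpa using zero_width
  | succ m ih => simpa [add_mul] using ih.add_width ht

theorem mul_height (n : ℕ) (ht : Tiles B w h) : Tiles B w (n * h) :=
  of_transpose (ht.transpose.mul_width n)

end Tiles

theorem tiles_grid (s m n : ℕ) : Tiles {(s, s)} (m * s) (n * s) :=
  ((Tiles.of_mem (Finset.mem_singleton_self _)).mul_width m).mul_height n

theorem tiles_strip {a b w h y₁ y₂ : ℕ} (hw : w = y₁ * a + y₂ * b) (ha : a ∣ h) (hb : b ∣ h) :
    Tiles {(a, a), (b, b)} w h := by
  have gridA : Tiles {(a, a)} (y₁ * a) h := by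
    simpa [Nat.div_mul_cancel ha] using tiles_grid a y₁ (h / a)
  have gridB : Tiles {(b, b)} (y₂ * b) h := by
    simpa [Nat.div_mul_cancel hb] using tiles_grid b y₂ (h / b)
  rw [hw]
  exact (gridA.mono (by simp)).add_width (gridB.mono (by simp))

theorem tiling_square_Lc_plus_kab_general (L a b c : ℕ)
    (hy : ∃ y1 y2 : ℕ, L * c = y1 * a + y2 * b) :
    ∀ k : ℕ, 1 ≤ k →
      Tiles {(a, a), (b, b), (c, c)} (L * c + k * a * b) (L * c + k * a * b) := by
  intro k _
  obtain ⟨y₁, y₂, hLc⟩ := hy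
  have ha : a ∣ k * a * b := ⟨k * b, by ring⟩
  have hb : b ∣ k * a * b := Dvd.intro_left _ rfl
  have hab_subset : ({(a, a), (b, b)} : Finset (ℕ × ℕ)) ⊆ {(a, a), (b, b), (c, c)} := by
    simp
  have corner : Tiles {(a, a), (b, b), (c, c)} (L * c) (L * c) :=
    (tiles_grid c L L).mono (by simp)
  have strip : Tiles {(a, a), (b, b)} (L * c) (k * a * b) := tiles_strip hLc ha hb
  have side : Tiles {(a, a), (b, b), (c, c)} (k * a * b) (L * c) :=
    Tiles.of_transpose (strip.mono (by simp))
  have block : Tiles {(a, a), (b, b)} (k * a * b) (k * a * b) :=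
    tiles_strip (y₁ := k * b) (y₂ := 0) (by ring) ha hb
  exact (corner.add_height (strip.mono hab_subset)).add_width
    (side.add_height (block.mono hab_subset))

/-- if L*c = y1*a + y2*b, then for every k ≥ 1 the square of
side L*c + k*a*b can be tiled with a×a, b×b and c×c squares. -/
theorem tiling_square_Lc_plus_kab (L a b c : ℕ)
    (hL : 0 < L) (ha : 0 < a) (hb : 0 < b) (hc : 0 < c)
    (hy : ∃ y1 y2 : ℕ, L * c = y1 * a + y2 * b) :
    ∀ k : ℕ, 1 ≤ k →
      Tiles {(a, a), (b, b), (c, c)} (L * c + k * a * b) (L * c + k * a * b) :=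
  tiling_square_Lc_plus_kab_general L a b c hy
end

section
/- Let p > 4 be an odd integer not divisible by 3. Then for every integer a ≥ 3p + 2, the square (a × a) can be tiled with squares (2 × 2), (3 × 3), and (p × p). -/
/-! If `2 ∣ a` or `3 ∣ a`, a grid of 2×2 or 3×3 squares does it. Otherwise `a` and `p` are prime
to 6, so `a ≡ ±p` or `a ≡ ±p + 6 (mod 12)`, that is `a = 2d + c` with `c ∈ {p, p + 6}` and `6 ∣ d`
or `6 ∣ d + c`. The square is then a pinwheel of four `(d + c) × d` rectangles around a central
`c × c` square (for `c = p + 6`, a `p × p` square bordered by strips of width 6). Each rectangle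
has one side divisible by 6 and the other at least 2, hence a sum of 2s and 3s, so it is cut into
6 × 2 and 6 × 3 blocks of 2×2 and 3×3 squares. -/

namespace Tiles

def Covers (q : ℕ × ℕ × ℕ × ℕ) (i j : ℕ) : Prop :=
  q.1 ≤ i ∧ i < q.1 + q.2.2.1 ∧ q.2.1 ≤ j ∧ j < q.2.1 + q.2.2.2

variable {b : Finset (ℕ × ℕ)}

theorem zero_fst (n : ℕ) : Tiles b 0 n :=
  ⟨∅, by simp, fun _ _ hi _ => absurd hi (Nat.not_lt_zero _)⟩

theorem zero_snd (m : ℕ) : Tiles b m 0 :=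
  ⟨∅, by simp, fun _ _ _ hj => absurd hj (Nat.not_lt_zero _)⟩

theorem of_mem_s13 {w h : ℕ} (hb : (w, h) ∈ b) : Tiles b w h := by
  refine ⟨{(0, 0, w, h)}, ?_, fun i j hi hj => ⟨(0, 0, w, h), ?_, ?_⟩⟩
  · simpa using hb
  · simp [hi, hj]
  · rintro q ⟨hq, -⟩
    simpa using hq

theorem glue {a1 a2 : ℕ} (R : Finset (ℕ × ℕ × ℕ × ℕ))
    (hsub : ∀ r ∈ R, r.1 + r.2.2.1 ≤ a1 ∧ r.2.1 + r.2.2.2 ≤ a2)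
    (hcover : ∀ i j, i < a1 → j < a2 → ∃ r ∈ R, Covers r i j)
    (hdisj : ∀ r ∈ R, ∀ s ∈ R, ∀ i j, Covers r i j → Covers s i j → r = s)
    (ht : ∀ r ∈ R, Tiles b r.2.2.1 r.2.2.2) : Tiles b a1 a2 := by
  unfold Tiles at ht
  choose! T hTb hTcov using ht
  let shift (r q : ℕ × ℕ × ℕ × ℕ) : ℕ × ℕ × ℕ × ℕ :=
    (r.1 + q.1, r.2.1 + q.2.1, q.2.2.1, q.2.2.2)
  refine ⟨R.biUnion fun r => (T r).image (shift r), ?_, ?_⟩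
  · simp only [Finset.mem_biUnion, Finset.mem_image]
    rintro _ ⟨r, hr, q, hq, rfl⟩
    obtain ⟨hbq, hw, hh⟩ := hTb r hr q hq
    obtain ⟨hr1, hr2⟩ := hsub r hr
    exact ⟨hbq, by dsimp [shift]; omega, by dsimp [shift]; omega⟩
  · intro i j hi hj
    obtain ⟨r, hr, hri, hri', hrj, hrj'⟩ := hcover i j hi hj
    obtain ⟨q, ⟨hq, hqij⟩, hq_unique⟩ :=
      hTcov r hr (i - r.1) (j - r.2.1) (by omega) (by omega)
    refine ⟨shift r q, ⟨Finset.mem_biUnion.mpr ⟨r, hr, Finset.mem_image_of_mem _ hq⟩, ?_⟩, ?_⟩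
    · dsimp [shift]; omega
    · simp only [Finset.mem_biUnion, Finset.mem_image]
      rintro _ ⟨⟨r', hr', q', hq', rfl⟩, hcov'⟩
      obtain ⟨-, hw', hh'⟩ := hTb r' hr' q' hq'
      dsimp [shift] at hcov'
      obtain rfl : r' = r :=
        hdisj r' hr' r hr i j (by unfold Covers; omega) ⟨hri, hri', hrj, hrj'⟩
      obtain rfl : q' = q := hq_unique q' ⟨hq', by omega⟩
      rfl

theorem add_fst {m₁ m₂ n : ℕ} (h₁ : Tiles b m₁ n) (h₂ : Tiles b m₂ n) :
    Tiles b (m₁ + m₂) n := by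
  apply glue {(0, 0, m₁, n), (m₁, 0, m₂, n)}
  · simp only [Finset.mem_insert, Finset.mem_singleton, forall_eq_or_imp, forall_eq]
    omega
  · simp only [Finset.mem_insert, Finset.mem_singleton, exists_eq_or_imp, exists_eq_left, Covers]
    omega
  · simp only [Finset.mem_insert, Finset.mem_singleton]
    rintro r (rfl | rfl) s (rfl | rfl) i j hr hs <;>
      first | rfl | (simp only [Covers] at hr hs; omega)
  · simpa using ⟨h₁, h₂⟩

theorem add_snd {m n₁ n₂ : ℕ} (h₁ : Tiles b m n₁) (h₂ : Tiles b m n₂) :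
    Tiles b m (n₁ + n₂) := by
  apply glue {(0, 0, m, n₁), (0, n₁, m, n₂)}
  · simp only [Finset.mem_insert, Finset.mem_singleton, forall_eq_or_imp, forall_eq]
    omega
  · simp only [Finset.mem_insert, Finset.mem_singleton, exists_eq_or_imp, exists_eq_left, Covers]
    omega
  · simp only [Finset.mem_insert, Finset.mem_singleton]
    rintro r (rfl | rfl) s (rfl | rfl) i j hr hs <;>
      first | rfl | (simp only [Covers] at hr hs; omega)
  · simpa using ⟨h₁, h₂⟩

theorem mul_fst {w n : ℕ} (h : Tiles b w n) : ∀ k, Tiles b (w * k) n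
  | 0 => zero_fst n
  | k + 1 => add_fst (mul_fst h k) h

theorem mul_snd {m h : ℕ} (ht : Tiles b m h) : ∀ k, Tiles b m (h * k)
  | 0 => zero_snd m
  | k + 1 => add_snd (mul_snd ht k) ht

theorem of_six_dvd_fst (h₂ : Tiles b 2 2) (h₃ : Tiles b 3 3) {m n : ℕ} (hm : 6 ∣ m)
    (hn : 2 ≤ n) : Tiles b m n := by
  obtain ⟨k, rfl⟩ := hm
  obtain ⟨j, l, rfl⟩ : ∃ j l, n = 2 * j + 3 * l := ⟨n / 2 - n % 2, n % 2, by omega⟩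
  rw [show 6 * k = 2 * (3 * k) by ring]
  refine add_snd (mul_snd (mul_fst h₂ _) j) ?_
  rw [show 2 * (3 * k) = 3 * (2 * k) by ring]
  exact mul_snd (mul_fst h₃ _) l

theorem of_six_dvd_snd (h₂ : Tiles b 2 2) (h₃ : Tiles b 3 3) {m n : ℕ} (hm : 2 ≤ m)
    (hn : 6 ∣ n) : Tiles b m n := by
  obtain ⟨k, rfl⟩ := hn
  obtain ⟨j, l, rfl⟩ : ∃ j l, m = 2 * j + 3 * l := ⟨m / 2 - m % 2, m % 2, by omega⟩
  rw [show 6 * k = 2 * (3 * k) by ring]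
  refine add_fst (mul_fst (mul_snd h₂ _) j) ?_
  rw [show 2 * (3 * k) = 3 * (2 * k) by ring]
  exact mul_fst (mul_snd h₃ _) l

theorem pinwheel {c d : ℕ} (hc : Tiles b c c) (hl : Tiles b (d + c) d) (hs : Tiles b d (d + c)) :
    Tiles b (2 * d + c) (2 * d + c) := by
  apply glue {(d, d, c, c), (0, 0, d + c, d), (d + c, 0, d, d + c), (d, d + c, d + c, d),
    (0, d, d, d + c)}
  · simp only [Finset.mem_insert, Finset.mem_singleton, forall_eq_or_imp, forall_eq]
    omega
  · simp only [Finset.mem_insert, Finset.mem_singleton, exists_eq_or_imp, exists_eq_left, Covers]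
    omega
  · simp only [Finset.mem_insert, Finset.mem_singleton]
    rintro r (rfl | rfl | rfl | rfl | rfl) s (rfl | rfl | rfl | rfl | rfl) i j hr hs <;>
      first | rfl | (simp only [Covers] at hr hs; omega)
  · simpa using ⟨hc, hl, hs, hl, hs⟩

theorem pinwheel_of_six_dvd (h₂ : Tiles b 2 2) (h₃ : Tiles b 3 3) {c d : ℕ} (hc : Tiles b c c)
    (hd : 2 ≤ d) (h6 : 6 ∣ d ∨ 6 ∣ d + c) : Tiles b (2 * d + c) (2 * d + c) := by
  rcases h6 with h6 | h6
  · exact pinwheel hc (of_six_dvd_snd h₂ h₃ (by omega) h6)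
      (of_six_dvd_fst h₂ h₃ h6 (by omega))
  · exact pinwheel hc (of_six_dvd_fst h₂ h₃ h6 hd) (of_six_dvd_snd h₂ h₃ hd h6)

end Tiles

theorem exists_pinwheel_decomposition {a p : ℕ} (hp : 4 < p) (ha : 3 * p + 2 ≤ a)
    (hp2 : p % 2 = 1) (ha2 : a % 2 = 1) (hp3 : ¬ 3 ∣ p) (ha3 : ¬ 3 ∣ a) :
    ∃ c d, (c = p ∨ c = p + 6) ∧ 2 ≤ d ∧ a = 2 * d + c ∧ (6 ∣ d ∨ 6 ∣ d + c) := by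
  have hp12 : p % 12 = 1 ∨ p % 12 = 5 ∨ p % 12 = 7 ∨ p % 12 = 11 := by omega
  have ha12 : a % 12 = 1 ∨ a % 12 = 5 ∨ a % 12 = 7 ∨ a % 12 = 11 := by omega
  by_cases h : (a - p) % 12 = 0 ∨ (a + p) % 12 = 0
  · exact ⟨p, (a - p) / 2, by omega⟩
  · exact ⟨p + 6, (a - p - 6) / 2, by omega⟩

/-- for odd p > 4 not divisible by 3, every square of side
a ≥ 3p + 2 can be tiled with 2×2, 3×3 and p×p squares. -/
theorem tiling_square_23p (p : ℕ) (hp4 : 4 < p) (hodd : Odd p) (h3 : ¬ (3 ∣ p)) :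
    ∀ a : ℕ, 3 * p + 2 ≤ a → Tiles {(2, 2), (3, 3), (p, p)} a a := by
  intro a ha
  have t₂ : Tiles {(2, 2), (3, 3), (p, p)} 2 2 := .of_mem (by simp)
  have t₃ : Tiles {(2, 2), (3, 3), (p, p)} 3 3 := .of_mem (by simp)
  have tₚ : Tiles {(2, 2), (3, 3), (p, p)} p p := .of_mem (by simp)
  by_cases ha2 : 2 ∣ a
  · obtain ⟨k, rfl⟩ := ha2
    exact (t₂.mul_snd k).mul_fst k
  by_cases ha3 : 3 ∣ a
  · obtain ⟨k, rfl⟩ := ha3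
    exact (t₃.mul_snd k).mul_fst k
  obtain ⟨c, d, hc, hd, rfl, h6⟩ := exists_pinwheel_decomposition hp4 ha (Nat.odd_iff.mp hodd)
    (by omega) h3 ha3
  have t_c : Tiles {(2, 2), (3, 3), (p, p)} c c := by
    rcases hc with rfl | rfl
    · exact tₚ
    · exact (tₚ.add_snd (.of_six_dvd_snd t₂ t₃ (by omega) (dvd_refl 6))).add_fst
        (.of_six_dvd_fst t₂ t₃ (dvd_refl 6) (by omega))
  exact Tiles.pinwheel_of_six_dvd t₂ t₃ t_c hd h6
end

section
/- The square (7 × 7) cannot be tiled with squares (2 × 2), (3 × 3), and (5 × 5). -/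
open Finset

def cells (q : ℕ × ℕ × ℕ × ℕ) : Finset (ℕ × ℕ) :=
  Ico q.1 (q.1 + q.2.2.1) ×ˢ Ico q.2.1 (q.2.1 + q.2.2.2)

lemma mem_cells {q : ℕ × ℕ × ℕ × ℕ} {c : ℕ × ℕ} :
    c ∈ cells q ↔ q.1 ≤ c.1 ∧ c.1 < q.1 + q.2.2.1 ∧ q.2.1 ≤ c.2 ∧ c.2 < q.2.1 + q.2.2.2 := by
  simp only [cells, mem_product, mem_Ico, and_assoc]

lemma card_cells (q : ℕ × ℕ × ℕ × ℕ) : #(cells q) = q.2.2.1 * q.2.2.2 := by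
  simp [cells]

theorem sum_range_product_eq_sum_sum_cells {a1 a2 : ℕ} {P : Finset (ℕ × ℕ × ℕ × ℕ)}
    (hfit : ∀ q ∈ P, q.1 + q.2.2.1 ≤ a1 ∧ q.2.1 + q.2.2.2 ≤ a2)
    (hcov : ∀ i j, i < a1 → j < a2 → ∃! q, q ∈ P ∧ (i, j) ∈ cells q)
    {M : Type*} [AddCommMonoid M] (f : ℕ × ℕ → M) :
    ∑ c ∈ range a1 ×ˢ range a2, f c = ∑ q ∈ P, ∑ c ∈ cells q, f c := by
  have hsub : ∀ q ∈ P, cells q ⊆ range a1 ×ˢ range a2 := by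
    intro q hq c hc
    have := hfit q hq
    rw [mem_cells] at hc
    simp only [mem_product, mem_range]
    omega
  have hunion : range a1 ×ˢ range a2 = P.biUnion cells := by
    refine Subset.antisymm (fun ⟨i, j⟩ hc ↦ ?_) (biUnion_subset.2 hsub)
    rw [mem_product, mem_range, mem_range] at hc
    obtain ⟨q, ⟨hq, hcq⟩, -⟩ := hcov i j hc.1 hc.2
    exact mem_biUnion.2 ⟨q, hq, hcq⟩
  rw [hunion, sum_biUnion]
  intro q hq q' hq' hne
  refine disjoint_left.2 fun ⟨i, j⟩ hc hc' ↦ hne ?_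
  have hij := mem_product.1 (hsub q hq hc)
  rw [mem_range, mem_range] at hij
  obtain ⟨_, _, huniq⟩ := hcov i j hij.1 hij.2
  exact (huniq q ⟨hq, hc⟩).trans (huniq q' ⟨hq', hc'⟩).symm

theorem Tiles.exists_sum_eq_sum_sum_cells {bricks : Finset (ℕ × ℕ)} {a1 a2 : ℕ}
    (h : Tiles bricks a1 a2) :
    ∃ P : Finset (ℕ × ℕ × ℕ × ℕ), (∀ q ∈ P, (q.2.2.1, q.2.2.2) ∈ bricks) ∧
      ∀ {M : Type} [AddCommMonoid M] (f : ℕ × ℕ → M),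
        ∑ c ∈ range a1 ×ˢ range a2, f c = ∑ q ∈ P, ∑ c ∈ cells q, f c := by
  obtain ⟨P, hP, hcov⟩ := h
  refine ⟨P, fun q hq ↦ (hP q hq).1, fun f ↦ ?_⟩
  refine sum_range_product_eq_sum_sum_cells (fun q hq ↦ (hP q hq).2) (fun i j hi hj ↦ ?_) f
  simpa only [mem_cells] using hcov i j hi hj

lemma sum_card_cells_of_square {P : Finset (ℕ × ℕ × ℕ × ℕ)} {S : Finset ℕ}
    (hsq : ∀ q ∈ P, q.2.2.2 = q.2.2.1) (hS : ∀ q ∈ P, q.2.2.1 ∈ S) :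
    ∑ q ∈ P, #(cells q) = ∑ k ∈ S, #{q ∈ P | q.2.2.1 = k} * k ^ 2 := by
  rw [← sum_fiberwise_of_maps_to hS]
  refine sum_congr rfl fun k _ ↦ sum_const_nat fun q hq ↦ ?_
  obtain ⟨hqP, rfl⟩ := mem_filter.1 hq
  rw [card_cells, hsq q hqP, sq]

lemma sum_Ico_neg_one_pow (x w : ℕ) :
    ∑ i ∈ Ico x (x + w), (-1 : ℤ) ^ i = (-1) ^ x * if Even w then 0 else 1 := by
  rw [sum_Ico_eq_sum_range, Nat.add_sub_cancel_left]
  simp only [pow_add, ← mul_sum, neg_one_geom_sum]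

lemma sum_cells_neg_one_pow (q : ℕ × ℕ × ℕ × ℕ) :
    ∑ c ∈ cells q, (-1 : ℤ) ^ c.1 =
      q.2.2.2 * ((-1) ^ q.1 * if Even q.2.2.1 then 0 else 1) := by
  simp only [cells, sum_product, sum_const, Nat.card_Ico, Nat.add_sub_cancel_left, nsmul_eq_mul,
    ← mul_sum, sum_Ico_neg_one_pow]

lemma dvd_sum_sum_cells_neg_one_pow {P : Finset (ℕ × ℕ × ℕ × ℕ)} {k : ℕ}
    (h : ∀ q ∈ P, q.2.2.2 = k ∨ Even q.2.2.1) :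
    (k : ℤ) ∣ ∑ q ∈ P, ∑ c ∈ cells q, (-1 : ℤ) ^ c.1 := by
  refine dvd_sum fun q hq ↦ ?_
  rw [sum_cells_neg_one_pow]
  rcases h q hq with hk | hw
  · exact hk ▸ dvd_mul_right _ _
  · simp [hw]

/-- the 7×7 square cannot be tiled with 2×2, 3×3 and 5×5 squares. -/
theorem no_tiling_7 : ¬ Tiles {(2, 2), (3, 3), (5, 5)} 7 7 := by
  intro hT
  obtain ⟨P, hP, hsum⟩ := hT.exists_sum_eq_sum_sum_cells
  have hside (q) (hq : q ∈ P) :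
      q.2.2.2 = q.2.2.1 ∧ (q.2.2.1 = 2 ∨ q.2.2.1 = 3 ∨ q.2.2.1 = 5) := by
    have := hP q hq
    simp only [mem_insert, mem_singleton, Prod.ext_iff] at this
    omega
  have harea : 4 * #{q ∈ P | q.2.2.1 = 2} + 9 * #{q ∈ P | q.2.2.1 = 3}
      + 25 * #{q ∈ P | q.2.2.1 = 5} = 49 := by
    have := hsum fun _ ↦ 1
    simp only [← card_eq_sum_ones, card_product, card_range] at this
    rw [sum_card_cells_of_square (S := {2, 3, 5}) (fun q hq ↦ (hside q hq).1)
      (fun q hq ↦ by simpa using (hside q hq).2), sum_insert (by decide), sum_insert (by decide),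
      sum_singleton] at this
    omega
  have hpar : ∑ q ∈ P, ∑ c ∈ cells q, (-1 : ℤ) ^ c.1 = 7 := by
    rw [← hsum]; decide
  have hdvd (k : ℕ) (hk : ∀ q ∈ P, q.2.2.1 = 2 ∨ q.2.2.1 = k) : (k : ℤ) ∣ 7 :=
    hpar ▸ dvd_sum_sum_cells_neg_one_pow fun q hq ↦
      (hk q hq).symm.imp (hside q hq).1.trans fun h ↦ by simp [h]
  obtain h3 | h5 : (∀ q ∈ P, q.2.2.1 ≠ 3) ∨ (∀ q ∈ P, q.2.2.1 ≠ 5) := by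
    simp only [ne_eq, ← filter_eq_empty_iff, ← card_eq_zero]
    have : #{q ∈ P | q.2.2.1 = 3} ≤ 5 := by omega
    interval_cases #{q ∈ P | q.2.2.1 = 3} <;> omega
  · exact absurd (hdvd 5 fun q hq ↦ by have := h3 q hq; have := hside q hq; omega) (by norm_num)
  · exact absurd (hdvd 3 fun q hq ↦ by have := h5 q hq; have := hside q hq; omega) (by norm_num)
end
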